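/- Assume hypothesis (H) and fix λ > 0, μ > 0 with λα + μγ > 0 and λβ + μδ > 0. Let u₁ = (x₁, y₁) ∈ S° with arctan(y₁/x₁) < arctan(d/c) (resp. > arctan(d/c)), and let A = {(x,y) ∈ S° : arctan(y₁/x₁) ≤ arctan(y/x) ≤ arctan(d/c)} (resp. B = {(x,y) ∈ S° : arctan(d/c) ≤ arctan(y/x) ≤ arctan(y₁/x₁)}). Then any solution to the system starting at a point of A stays in A for all t ≥ 0, and any solution starting at a point of B stays in B for all t ≥ 0. -/

import Mathlib

open MeasureTheory

/-- A solution to the system starting at `(x₀, y₀)`: a pair of continuous functions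
`x, y : [0,∞) → [0,∞)` (modelled as functions `ℝ → ℝ` that are continuous and
nonnegative on `[0,∞)`) with `x 0 = x₀`, `y 0 = y₀`, such that for all `t ≥ 0`
the sets `{s ∈ [0,t] | x s = 0}` and `{s ∈ [0,t] | y s = 0}` are Lebesgue-null, the
integrals `∫₀ᵗ ds / x s` and `∫₀ᵗ ds / y s` are finite (note `1 / 0 = 0` in Lean, so
`1 / x s` is the same as `1_{x(s) > 0} / x s`), and the two integral equations hold. -/
def IsSolution (α β γ δ x₀ y₀ : ℝ) (x y : ℝ → ℝ) : Prop :=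
  ContinuousOn x (Set.Ici 0) ∧ ContinuousOn y (Set.Ici 0) ∧
  (∀ t ≥ (0:ℝ), 0 ≤ x t ∧ 0 ≤ y t) ∧
  x 0 = x₀ ∧ y 0 = y₀ ∧
  ∀ t ≥ (0:ℝ),
    volume {s ∈ Set.Icc (0:ℝ) t | x s = 0} = 0 ∧
    volume {s ∈ Set.Icc (0:ℝ) t | y s = 0} = 0 ∧
    IntervalIntegrable (fun s => 1 / x s) volume 0 t ∧
    IntervalIntegrable (fun s => 1 / y s) volume 0 t ∧
    x t = x₀ + α * (∫ s in (0:ℝ)..t, 1 / x s) + β * (∫ s in (0:ℝ)..t, 1 / y s) ∧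
    y t = y₀ + γ * (∫ s in (0:ℝ)..t, 1 / x s) + δ * (∫ s in (0:ℝ)..t, 1 / y s)

/-- The angle `θ(x, y) = arctan (y / x)` of a point of the punctured quadrant `S°`,
with the convention `θ = π/2` when `x = 0`. -/
noncomputable def thetaFun (X Y : ℝ) : ℝ :=
  if X = 0 then Real.pi / 2 else Real.arctan (Y / X)

/-!
Along a solution, `d/dt (b x - a y) = F / (x y)` with `F` linear in `(x, y)`; on the ray through
`(a, b)` the sign of `F` is that of the quadratic form `α b² + (β - γ) a b - δ a²`, whose unique
positive root (in the slope `b / a`) is `d / c`. So rays steeper than `(c, d)` can only be crossed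
towards smaller slopes and flatter rays only towards larger slopes: a continuous `b x - a y` that
vanishes at a time where `F > 0` is nondecreasing just after it, hence can never become negative.
The critical ray itself is a limit of such rays. The solution never reaches the origin, where all
this degenerates, because `λ x + μ y` is nondecreasing along it.
-/

open Set Filter Topology

theorem add_pos_of_not_both_zero {a b : ℝ} (ha : 0 ≤ a) (hb : 0 ≤ b) (h : ¬(a = 0 ∧ b = 0)) :
    0 < a + b := by
  by_contra hle
  exact h ⟨by linarith, by linarith⟩

theorem le_mul_of_forall_lt_le_mul {A X d : ℝ} (h : ∀ b > d, A ≤ X * b) : A ≤ X * d :=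
  ge_of_tendsto ((continuous_const.mul continuous_id).tendsto d |>.mono_left nhdsWithin_le_nhds)
    (eventually_nhdsWithin_of_forall (s := Ioi d) h)

theorem ContinuousOn.nonneg_of_eventually_nonneg_after_zeros {G : ℝ → ℝ} {a : ℝ}
    (hG : ContinuousOn G (Ici a)) (ha : 0 ≤ G a)
    (hzero : ∀ T ≥ a, G T = 0 → ∀ᶠ t in 𝓝[>] T, 0 ≤ G t) {t : ℝ} (ht : a ≤ t) : 0 ≤ G t := by
  have hclosed : IsClosed ({s | 0 ≤ G s} ∩ Icc a t) := by
    rw [inter_comm]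
    exact (hG.mono Icc_subset_Ici_self).preimage_isClosed_of_isClosed isClosed_Icc isClosed_Ici
  refine hclosed.Icc_subset_of_forall_mem_nhdsWithin ha (fun T ⟨hGT, hT⟩ => ?_) ⟨ht, le_rfl⟩
  rcases (show 0 ≤ G T from hGT).lt_or_eq with hpos | hzero'
  · have hcont : ContinuousWithinAt G (Ioi T) T :=
      (hG T hT.1).mono (Ioi_subset_Ici_self.trans (Ici_subset_Ici.2 hT.1))
    exact (hcont.eventually (lt_mem_nhds hpos)).mono fun _ h => h.le
  · exact hzero T hT.1 hzero'.symm

/-- The field `(α / x + β / y, γ / x + δ / y)` crosses the ray `ℝ₊ (a, b)` towards smaller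
slopes where this is positive, towards larger slopes where it is negative. -/
def rayFlux (α β γ δ a b : ℝ) : ℝ := α * b ^ 2 + (β - γ) * a * b - δ * a ^ 2

theorem rayFlux_swap (α β γ δ a b : ℝ) : rayFlux δ γ β α b a = -rayFlux α β γ δ a b := by
  unfold rayFlux
  ring

namespace IsSolution

variable {α β γ δ x₀ y₀ : ℝ} {x y : ℝ → ℝ}

theorem swap (h : IsSolution α β γ δ x₀ y₀ x y) : IsSolution δ γ β α y₀ x₀ y x := by
  obtain ⟨hx, hy, hnn, hx₀, hy₀, hint⟩ := h
  refine ⟨hy, hx, fun t ht => (hnn t ht).symm, hy₀, hx₀, fun t ht => ?_⟩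
  obtain ⟨nx, ny, ix, iy, ex, ey⟩ := hint t ht
  exact ⟨ny, nx, iy, ix, by rw [ey]; ring, by rw [ex]; ring⟩

theorem nonneg (h : IsSolution α β γ δ x₀ y₀ x y) {t : ℝ} (ht : 0 ≤ t) : 0 ≤ x t ∧ 0 ≤ y t :=
  h.2.2.1 t ht

theorem initial (h : IsSolution α β γ δ x₀ y₀ x y) : x 0 = x₀ ∧ y 0 = y₀ :=
  ⟨h.2.2.2.1, h.2.2.2.2.1⟩

theorem ae_pos (h : IsSolution α β γ δ x₀ y₀ x y) {t : ℝ} (ht : 0 ≤ t) :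
    ∀ᵐ u, u ∈ Icc 0 t → 0 < x u ∧ 0 < y u := by
  obtain ⟨-, -, hnn, -, -, hint⟩ := h
  obtain ⟨hx0, hy0, -⟩ := hint t ht
  filter_upwards [measure_eq_zero_iff_ae_notMem.1 hx0, measure_eq_zero_iff_ae_notMem.1 hy0]
    with u hxu hyu hu
  exact ⟨(hnn u hu.1).1.lt_of_ne fun e => hxu ⟨hu, e.symm⟩,
    (hnn u hu.1).2.lt_of_ne fun e => hyu ⟨hu, e.symm⟩⟩

-- `d/dt (p x + q y) = ((p α + q γ) y + (p β + q δ) x) / (x y)` almost everywhere.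
theorem linear_le (h : IsSolution α β γ δ x₀ y₀ x y) {p q s t : ℝ} (hs : 0 ≤ s) (hst : s ≤ t)
    (hflux : ∀ u ∈ Icc s t, 0 ≤ (p * α + q * γ) * y u + (p * β + q * δ) * x u) :
    p * x s + q * y s ≤ p * x t + q * y t := by
  have hpos := h.ae_pos (hs.trans hst)
  obtain ⟨-, -, -, -, -, hint⟩ := h
  obtain ⟨-, -, hixs, hiys, hxs, hys⟩ := hint s hs
  obtain ⟨-, -, hixt, hiyt, hxt, hyt⟩ := hint t (hs.trans hst)
  have hincr : p * x t + q * y t - (p * x s + q * y s)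
      = ∫ u in s..t, ((p * α + q * γ) * (1 / x u) + (p * β + q * δ) * (1 / y u)) := by
    rw [intervalIntegral.integral_add ((hixs.symm.trans hixt).const_mul _)
        ((hiys.symm.trans hiyt).const_mul _), intervalIntegral.integral_const_mul,
      intervalIntegral.integral_const_mul, ← intervalIntegral.integral_interval_sub_left hixt hixs,
      ← intervalIntegral.integral_interval_sub_left hiyt hiys, hxs, hys, hxt, hyt]
    ring
  have hnonneg : 0 ≤ᵐ[volume.restrict (Icc s t)]
      fun u => (p * α + q * γ) * (1 / x u) + (p * β + q * δ) * (1 / y u) := by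
    rw [EventuallyLE, ae_restrict_iff' measurableSet_Icc]
    filter_upwards [hpos] with u hpos hu
    obtain ⟨hxu, hyu⟩ := hpos ⟨hs.trans hu.1, hu.2⟩
    have hquot : (p * α + q * γ) * (1 / x u) + (p * β + q * δ) * (1 / y u)
        = ((p * α + q * γ) * y u + (p * β + q * δ) * x u) / (x u * y u) := by
      field_simp
    rw [Pi.zero_apply, hquot]
    exact div_nonneg (hflux u hu) (mul_pos hxu hyu).le
  linarith [intervalIntegral.integral_nonneg_of_ae_restrict hst hnonneg]

theorem ne_origin (h : IsSolution α β γ δ x₀ y₀ x y) {lam mu : ℝ} (hlam : 0 < lam) (hmu : 0 < mu)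
    (h1 : 0 < lam * α + mu * γ) (h2 : 0 < lam * β + mu * δ)
    (hx₀ : 0 ≤ x₀) (hy₀ : 0 ≤ y₀) (hne₀ : ¬(x₀ = 0 ∧ y₀ = 0)) {t : ℝ} (ht : 0 ≤ t) :
    ¬(x t = 0 ∧ y t = 0) := by
  rintro ⟨hxt, hyt⟩
  have hincr := h.linear_le le_rfl ht fun u hu => by
    obtain ⟨hxu, hyu⟩ := h.nonneg hu.1
    positivity
  have hstart : 0 < lam * x₀ + mu * y₀ := by
    rcases hx₀.lt_or_eq with hx₀ | rfl
    · positivity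
    · have hy₀ : 0 < y₀ := hy₀.lt_of_ne fun e => hne₀ ⟨rfl, e.symm⟩
      positivity
  rw [h.initial.1, h.initial.2, hxt, hyt] at hincr
  linarith

theorem below_ray (h : IsSolution α β γ δ x₀ y₀ x y) (hnv : ∀ t ≥ 0, ¬(x t = 0 ∧ y t = 0))
    {a b : ℝ} (ha : 0 ≤ a) (hb : 0 ≤ b) (hab : ¬(a = 0 ∧ b = 0))
    (hflux : 0 < rayFlux α β γ δ a b) (h₀ : y₀ * a ≤ x₀ * b) {t : ℝ} (ht : 0 ≤ t) :
    y t * a ≤ x t * b := by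
  have ⟨hxc, hyc, hnn, hx₀, hy₀, _⟩ := h
  set F := fun u => (b * α + -a * γ) * y u + (b * β + -a * δ) * x u with hF
  have hFc : ContinuousOn F (Ici 0) := by fun_prop
  suffices hG : 0 ≤ x t * b - y t * a by linarith
  refine ContinuousOn.nonneg_of_eventually_nonneg_after_zeros (G := fun s => x s * b - y s * a)
    (by fun_prop) (by rw [hx₀, hy₀]; linarith) (fun T hT hGT => ?_) ht
  beta_reduce at hGT ⊢
  have hFT : 0 < F T := by
    -- on the ray `(x T, y T)` is a positive multiple of `(a, b)`
    have hray : (a + b) * F T = (x T + y T) * rayFlux α β γ δ a b := by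
      simp only [hF, rayFlux]
      linear_combination (b * β - a * δ - α * b + γ * a) * hGT
    have hxy := add_pos_of_not_both_zero (hnn T hT).1 (hnn T hT).2 (hnv T hT)
    have hab' := add_pos_of_not_both_zero ha hb hab
    exact pos_of_mul_pos_right (hray ▸ mul_pos hxy hflux) hab'.le
  have hFev : ∀ᶠ u in 𝓝[≥] T, 0 < F u :=
    ((hFc T hT).mono (Ici_subset_Ici.2 hT)).eventually (lt_mem_nhds hFT)
  obtain ⟨T', hTT', hsub⟩ := mem_nhdsGE_iff_exists_Ico_subset.1 hFev
  filter_upwards [Ioo_mem_nhdsGT hTT'] with t' ht'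
  have := h.linear_le hT ht'.1.le fun u hu => (hsub ⟨hu.1, hu.2.trans_lt ht'.2⟩).le
  linarith

theorem above_ray (h : IsSolution α β γ δ x₀ y₀ x y) (hnv : ∀ t ≥ 0, ¬(x t = 0 ∧ y t = 0))
    {a b : ℝ} (ha : 0 ≤ a) (hb : 0 ≤ b) (hab : ¬(a = 0 ∧ b = 0))
    (hflux : rayFlux α β γ δ a b < 0) (h₀ : b * x₀ ≤ a * y₀) {t : ℝ} (ht : 0 ≤ t) :
    b * x t ≤ a * y t := by
  have := h.swap.below_ray (fun t ht hxy => hnv t ht hxy.symm) hb ha (fun hba => hab hba.symm)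
    (by rw [rayFlux_swap]; linarith) (by linarith [mul_comm x₀ b, mul_comm y₀ a]) ht
  linarith [mul_comm (x t) b, mul_comm (y t) a]

theorem below_critical_ray (h : IsSolution α β γ δ x₀ y₀ x y)
    (hnv : ∀ t ≥ 0, ¬(x t = 0 ∧ y t = 0)) {c d : ℝ} (hc : 0 < c) (hd : 0 ≤ d)
    (hflux : ∀ b > d, 0 < rayFlux α β γ δ c b) (h₀ : y₀ * c ≤ x₀ * d) {t : ℝ} (ht : 0 ≤ t) :
    y t * c ≤ x t * d := by
  have hx₀ : 0 ≤ x₀ := h.initial.1 ▸ (h.nonneg le_rfl).1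
  refine le_mul_of_forall_lt_le_mul fun b hb => h.below_ray hnv hc.le (hd.trans hb.le)
    (fun hc0 => hc.ne' hc0.1) (hflux b hb) ?_ ht
  nlinarith

theorem above_critical_ray (h : IsSolution α β γ δ x₀ y₀ x y)
    (hnv : ∀ t ≥ 0, ¬(x t = 0 ∧ y t = 0)) {c d : ℝ} (hc : 0 ≤ c) (hd : 0 < d)
    (hflux : ∀ a > c, rayFlux α β γ δ a d < 0) (h₀ : d * x₀ ≤ c * y₀) {t : ℝ} (ht : 0 ≤ t) :
    d * x t ≤ c * y t := by
  have := h.swap.below_critical_ray (fun t ht hxy => hnv t ht hxy.symm) hd hc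
    (fun a ha => by rw [rayFlux_swap]; linarith [hflux a ha])
    (by linarith [mul_comm x₀ d, mul_comm y₀ c]) ht
  linarith [mul_comm (x t) d, mul_comm (y t) c]

end IsSolution

section CriticalDirection

variable {α β γ δ a b c d : ℝ}

theorem abs_sub_lt_sqrt_discr (hα : 0 < α) (hδ : 0 < δ) :
    |β - γ| < √((β - γ) ^ 2 + 4 * α * δ) := by
  rw [Real.lt_sqrt (abs_nonneg _), sq_abs]
  nlinarith [mul_pos hα hδ]

theorem critical_radicand_pos (hα : 0 < α) (hδ : 0 < δ) (hH : max β γ ≥ 0 ∨ β * γ < α * δ) :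
    0 < 2 * α + β / δ * (β - γ + √((β - γ) ^ 2 + 4 * α * δ)) := by
  obtain ⟨hKl, hKr⟩ := abs_lt.1 (abs_sub_lt_sqrt_discr (β := β) (γ := γ) hα hδ)
  set K := √((β - γ) ^ 2 + 4 * α * δ)
  have hK2 : K ^ 2 = (β - γ) ^ 2 + 4 * α * δ := Real.sq_sqrt (by positivity)
  have hαδ := mul_pos hα hδ
  suffices hpos : 0 < 2 * α * δ + β * (β - γ + K) by
    rw [show 2 * α + β / δ * (β - γ + K) = (2 * α * δ + β * (β - γ + K)) / δ by field_simp]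
    exact div_pos hpos hδ
  rcases le_or_gt 0 β with hβ | hβ
  · nlinarith [mul_nonneg hβ (show 0 ≤ β - γ + K by linarith)]
  have hβγ : β * γ < α * δ := by
    rcases hH with h | h
    · have hγ : 0 ≤ γ := (le_max_iff.1 h).resolve_left (not_le.2 hβ)
      nlinarith
    · exact h
  -- the conjugate factor is positive, and so is the product of the two
  have hconj : 0 < 2 * α * δ + β * (β - γ - K) := by
    nlinarith [sq_nonneg β, mul_pos (neg_pos.2 hβ) (show 0 < K by linarith)]
  have hprod : (2 * α * δ + β * (β - γ + K)) * (2 * α * δ + β * (β - γ - K))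
      = 4 * α * δ * (α * δ - β * γ) := by
    linear_combination (-β ^ 2) * hK2
  exact pos_of_mul_pos_left (hprod ▸ by positivity) hconj.le

-- `2 α d = c (K - (β - γ))` says that `d / c` is the positive root of `α m² + (β - γ) m - δ`.
theorem critical_direction (hα : 0 < α) (hδ : 0 < δ) (hH : max β γ ≥ 0 ∨ β * γ < α * δ)
    (hc : c = √(2 * α + β / δ * (β - γ + √((β - γ) ^ 2 + 4 * α * δ))))
    (hd : d = √(2 * δ + γ / α * (γ - β + √((β - γ) ^ 2 + 4 * α * δ)))) :
    0 < c ∧ 0 < d ∧ 2 * α * d = c * (√((β - γ) ^ 2 + 4 * α * δ) - (β - γ)) := by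
  have hRc := critical_radicand_pos hα hδ hH
  have hRd := critical_radicand_pos hδ hα (β := γ) (γ := β)
    (by rwa [max_comm, mul_comm γ, mul_comm δ])
  rw [show (γ - β) ^ 2 + 4 * δ * α = (β - γ) ^ 2 + 4 * α * δ by ring] at hRd
  obtain ⟨hKl, hKr⟩ := abs_lt.1 (abs_sub_lt_sqrt_discr (β := β) (γ := γ) hα hδ)
  set K := √((β - γ) ^ 2 + 4 * α * δ)
  have hK2 : K ^ 2 = (β - γ) ^ 2 + 4 * α * δ := Real.sq_sqrt (by positivity)
  have hc₀ : 0 < c := hc ▸ Real.sqrt_pos.2 hRc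
  have hd₀ : 0 < d := hd ▸ Real.sqrt_pos.2 hRd
  have hc2 : δ * c ^ 2 = 2 * α * δ + β * (β - γ + K) := by
    rw [hc, Real.sq_sqrt hRc.le]
    field_simp
  have hd2 : α * d ^ 2 = 2 * α * δ + γ * (γ - β + K) := by
    rw [hd, Real.sq_sqrt hRd.le]
    field_simp
  refine ⟨hc₀, hd₀, (pow_left_inj₀ (by positivity) (mul_nonneg hc₀.le (by linarith))
    two_ne_zero).1 (mul_left_cancel₀ hδ.ne' ?_)⟩
  linear_combination (4 * α * δ) * hd2 - (K - (β - γ)) ^ 2 * hc2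
    - (2 * α * δ + β * (K - (β - γ))) * hK2

theorem two_mul_mul_rayFlux (hα : 0 < α) (hδ : 0 < δ)
    (hcd : 2 * α * d = c * (√((β - γ) ^ 2 + 4 * α * δ) - (β - γ))) :
    2 * c * rayFlux α β γ δ a b
      = (b * c - d * a) * (2 * α * b + (β - γ + √((β - γ) ^ 2 + 4 * α * δ)) * a) := by
  set K := √((β - γ) ^ 2 + 4 * α * δ)
  have hK2 : K ^ 2 = (β - γ) ^ 2 + 4 * α * δ := Real.sq_sqrt (by positivity)
  refine mul_left_cancel₀ (mul_pos two_pos hα).ne' ?_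
  unfold rayFlux
  linear_combination (c * a ^ 2) * hK2 + ((2 * α * b + (β - γ + K) * a) * a) * hcd

theorem critical_cofactor_pos (hα : 0 < α) (hδ : 0 < δ) (ha : 0 ≤ a) (hb : 0 ≤ b)
    (hab : ¬(a = 0 ∧ b = 0)) : 0 < 2 * α * b + (β - γ + √((β - γ) ^ 2 + 4 * α * δ)) * a := by
  have hK := (abs_lt.1 (abs_sub_lt_sqrt_discr (β := β) (γ := γ) hα hδ)).1
  rcases ha.lt_or_eq with ha | rfl
  · nlinarith
  · have hb : 0 < b := hb.lt_of_ne fun e => hab ⟨rfl, e.symm⟩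
    nlinarith

theorem rayFlux_pos_of_lt (hα : 0 < α) (hδ : 0 < δ) (hc : 0 < c)
    (hcd : 2 * α * d = c * (√((β - γ) ^ 2 + 4 * α * δ) - (β - γ)))
    (ha : 0 ≤ a) (hb : 0 ≤ b) (hab : ¬(a = 0 ∧ b = 0)) (h : d * a < c * b) :
    0 < rayFlux α β γ δ a b := by
  have hcof := critical_cofactor_pos (β := β) (γ := γ) hα hδ ha hb hab
  have hsub : 0 < b * c - d * a := by linarith [mul_comm b c]
  exact pos_of_mul_pos_right (two_mul_mul_rayFlux hα hδ hcd ▸ mul_pos hsub hcof) (by positivity)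

theorem rayFlux_neg_of_lt (hα : 0 < α) (hδ : 0 < δ) (hc : 0 < c)
    (hcd : 2 * α * d = c * (√((β - γ) ^ 2 + 4 * α * δ) - (β - γ)))
    (ha : 0 ≤ a) (hb : 0 ≤ b) (hab : ¬(a = 0 ∧ b = 0)) (h : b * c < a * d) :
    rayFlux α β γ δ a b < 0 := by
  have hcof := critical_cofactor_pos (β := β) (γ := γ) hα hδ ha hb hab
  have hsub : b * c - d * a < 0 := by linarith [mul_comm a d]
  exact neg_of_mul_neg_right (two_mul_mul_rayFlux hα hδ hcd ▸ mul_neg_of_neg_of_pos hsub hcof)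
    (by positivity)

theorem rayFlux_pos_of_gt_critical (hα : 0 < α) (hδ : 0 < δ) (hc : 0 < c)
    (hcd : 2 * α * d = c * (√((β - γ) ^ 2 + 4 * α * δ) - (β - γ))) (hd : 0 ≤ d) (hb : d < b) :
    0 < rayFlux α β γ δ c b :=
  rayFlux_pos_of_lt hα hδ hc hcd hc.le (hd.trans hb.le) (fun h => hc.ne' h.1)
    (by rw [mul_comm]; exact mul_lt_mul_of_pos_left hb hc)

theorem rayFlux_neg_of_gt_critical (hα : 0 < α) (hδ : 0 < δ) (hc : 0 < c)
    (hcd : 2 * α * d = c * (√((β - γ) ^ 2 + 4 * α * δ) - (β - γ))) (hd : 0 < d) (ha : c < a) :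
    rayFlux α β γ δ a d < 0 :=
  rayFlux_neg_of_lt hα hδ hc hcd (hc.le.trans ha.le) hd.le (fun h => hd.ne' h.2)
    (by rw [mul_comm d]; exact mul_lt_mul_of_pos_right ha hd)

end CriticalDirection

theorem thetaFun_le_thetaFun_iff {a b x y : ℝ} (ha : 0 ≤ a) (hb : 0 ≤ b) (hab : ¬(a = 0 ∧ b = 0))
    (hx : 0 ≤ x) (hy : 0 ≤ y) : thetaFun a b ≤ thetaFun x y ↔ b * x ≤ a * y := by
  rcases ha.lt_or_eq with ha | rfl
  · rcases hx.lt_or_eq with hx | rfl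
    · simp only [thetaFun, ha.ne', hx.ne', if_false, Real.arctan_le_arctan_iff]
      rw [div_le_div_iff₀ ha hx, mul_comm y]
    · simp only [thetaFun, ha.ne', if_false, if_true, mul_zero, mul_nonneg ha.le hy, iff_true]
      exact (Real.arctan_lt_pi_div_two _).le
  · have hb : 0 < b := hb.lt_of_ne fun e => hab ⟨rfl, e.symm⟩
    rcases hx.lt_or_eq with hx | rfl
    · simp only [thetaFun, if_true, hx.ne', if_false, zero_mul]
      exact iff_of_false (not_le.2 (Real.arctan_lt_pi_div_two _)) (not_le.2 (mul_pos hb hx))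
    · simp [thetaFun]

theorem thetaFun_lt_thetaFun_iff {a b x y : ℝ} (ha : 0 ≤ a) (hb : 0 ≤ b)
    (hx : 0 ≤ x) (hy : 0 ≤ y) (hxy : ¬(x = 0 ∧ y = 0)) :
    thetaFun a b < thetaFun x y ↔ b * x < a * y := by
  rw [← not_le, thetaFun_le_thetaFun_iff hx hy hxy ha hb, not_le, mul_comm b, mul_comm a]

theorem arctan_div_eq_thetaFun {c d : ℝ} (hc : c ≠ 0) : Real.arctan (d / c) = thetaFun c d := by
  simp [thetaFun, hc]

/-- Under (H), with `λ, μ > 0` such that `λα + μγ > 0` and `λβ + μδ > 0`,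
let `u₁ = (x₁, y₁) ∈ S°`. If `arctan (y₁/x₁) < arctan (d/c)` and
`A = {(x,y) ∈ S° : arctan (y₁/x₁) ≤ arctan (y/x) ≤ arctan (d/c)}`, then any solution
starting at a point of `A` stays in `A` for all `t ≥ 0`; similarly, if
`arctan (y₁/x₁) > arctan (d/c)` and
`B = {(x,y) ∈ S° : arctan (d/c) ≤ arctan (y/x) ≤ arctan (y₁/x₁)}`, then any solution
starting at a point of `B` stays in `B` for all `t ≥ 0`. -/
theorem sector_invariance (α β γ δ : ℝ) (hα : 0 < α) (hδ : 0 < δ)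
    (hH : max β γ ≥ 0 ∨ β * γ < α * δ)
    (lam mu : ℝ) (hlam : 0 < lam) (hmu : 0 < mu)
    (h1 : 0 < lam * α + mu * γ) (h2 : 0 < lam * β + mu * δ)
    (c d : ℝ)
    (hc : c = Real.sqrt (2 * α + β / δ * (β - γ + Real.sqrt ((β - γ) ^ 2 + 4 * α * δ))))
    (hd : d = Real.sqrt (2 * δ + γ / α * (γ - β + Real.sqrt ((β - γ) ^ 2 + 4 * α * δ))))
    (x₁ y₁ : ℝ) (hx₁ : 0 ≤ x₁) (hy₁ : 0 ≤ y₁) (hne : ¬(x₁ = 0 ∧ y₁ = 0)) :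
    (thetaFun x₁ y₁ < Real.arctan (d / c) →
      ∀ x₀ y₀ : ℝ,
        (0 ≤ x₀ ∧ 0 ≤ y₀ ∧ ¬(x₀ = 0 ∧ y₀ = 0) ∧
          thetaFun x₁ y₁ ≤ thetaFun x₀ y₀ ∧ thetaFun x₀ y₀ ≤ Real.arctan (d / c)) →
        ∀ x y : ℝ → ℝ, IsSolution α β γ δ x₀ y₀ x y →
          ∀ t ≥ (0:ℝ),
            0 ≤ x t ∧ 0 ≤ y t ∧ ¬(x t = 0 ∧ y t = 0) ∧
            thetaFun x₁ y₁ ≤ thetaFun (x t) (y t) ∧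
            thetaFun (x t) (y t) ≤ Real.arctan (d / c)) ∧
    (Real.arctan (d / c) < thetaFun x₁ y₁ →
      ∀ x₀ y₀ : ℝ,
        (0 ≤ x₀ ∧ 0 ≤ y₀ ∧ ¬(x₀ = 0 ∧ y₀ = 0) ∧
          Real.arctan (d / c) ≤ thetaFun x₀ y₀ ∧ thetaFun x₀ y₀ ≤ thetaFun x₁ y₁) →
        ∀ x y : ℝ → ℝ, IsSolution α β γ δ x₀ y₀ x y →
          ∀ t ≥ (0:ℝ),
            0 ≤ x t ∧ 0 ≤ y t ∧ ¬(x t = 0 ∧ y t = 0) ∧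
            Real.arctan (d / c) ≤ thetaFun (x t) (y t) ∧
            thetaFun (x t) (y t) ≤ thetaFun x₁ y₁) := by
  obtain ⟨hc₀, hd₀, hcd⟩ := critical_direction hα hδ hH hc hd
  have hcd₀ : ¬(c = 0 ∧ d = 0) := fun h => hc₀.ne' h.1
  rw [arctan_div_eq_thetaFun hc₀.ne']
  constructor
  all_goals
    rintro hlt x₀ y₀ ⟨hx₀, hy₀, hne₀, hlow, hup⟩ x y hsol t ht
    have hnv : ∀ t ≥ 0, ¬(x t = 0 ∧ y t = 0) := fun t ht =>
      hsol.ne_origin hlam hmu h1 h2 hx₀ hy₀ hne₀ ht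
    obtain ⟨hxt, hyt⟩ := hsol.nonneg ht
    refine ⟨hxt, hyt, hnv t ht, ?_, ?_⟩
  · rw [thetaFun_lt_thetaFun_iff hx₁ hy₁ hc₀.le hd₀.le hcd₀] at hlt
    rw [thetaFun_le_thetaFun_iff hx₁ hy₁ hne hx₀ hy₀] at hlow
    rw [thetaFun_le_thetaFun_iff hx₁ hy₁ hne hxt hyt]
    exact hsol.above_ray hnv hx₁ hy₁ hne (rayFlux_neg_of_lt hα hδ hc₀ hcd hx₁ hy₁ hne hlt) hlow ht
  · rw [thetaFun_le_thetaFun_iff hx₀ hy₀ hne₀ hc₀.le hd₀.le] at hup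
    rw [thetaFun_le_thetaFun_iff hxt hyt (hnv t ht) hc₀.le hd₀.le]
    exact hsol.below_critical_ray hnv hc₀ hd₀.le
      (fun b => rayFlux_pos_of_gt_critical hα hδ hc₀ hcd hd₀.le) hup ht
  · rw [thetaFun_le_thetaFun_iff hc₀.le hd₀.le hcd₀ hx₀ hy₀] at hlow
    rw [thetaFun_le_thetaFun_iff hc₀.le hd₀.le hcd₀ hxt hyt]
    exact hsol.above_critical_ray hnv hc₀.le hd₀
      (fun a => rayFlux_neg_of_gt_critical hα hδ hc₀ hcd hd₀) hlow ht
  · rw [thetaFun_lt_thetaFun_iff hc₀.le hd₀.le hx₁ hy₁ hne] at hlt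
    rw [thetaFun_le_thetaFun_iff hx₀ hy₀ hne₀ hx₁ hy₁] at hup
    rw [thetaFun_le_thetaFun_iff hxt hyt (hnv t ht) hx₁ hy₁]
    exact hsol.below_ray hnv hx₁ hy₁ hne (rayFlux_pos_of_lt hα hδ hc₀ hcd hx₁ hy₁ hne hlt) hup ht
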